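/- arXiv:0704.2919 — 4 statements merged into one kernel-verified Lean document; each statement's English description precedes it below -/
import Mathlib

section
/- The span of a well-graded family of finite sets is itself well-graded. -/
open Finset

variable {α : Type*} [DecidableEq α]

/-- The span of a family `G`: all unions of nonempty subfamilies of `G`. -/
def Span (G : Finset (Finset α)) : Finset (Finset α) :=
  (G.powerset.filter Finset.Nonempty).image fun H => H.sup id

/-- A family is ∪-closed if it contains the union of each of its nonempty subfamilies. -/
def UnionClosed (F : Finset (Finset α)) : Prop :=
  ∀ H ⊆ F, H.Nonempty → H.sup id ∈ F

/-- `p` is a tight path from `P` to `Q` inside the family `F`. -/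
def IsTightPath (F : Finset (Finset α)) (P Q : Finset α) (p : List (Finset α)) : Prop :=
  p.head? = some P ∧ p.getLast? = some Q ∧
  p.length = (symmDiff P Q).card + 1 ∧
  (∀ S ∈ p, S ∈ F) ∧
  List.Chain' (fun A B => (symmDiff A B).card = 1) p

/-- A family is well-graded if any two distinct members are joined by a tight path. -/
def WellGraded (F : Finset (Finset α)) : Prop :=
  ∀ P ∈ F, ∀ Q ∈ F, P ≠ Q → ∃ p, IsTightPath F P Q p

/-- `B` is a base of `F`: a minimal subfamily of `F` spanning `F`. -/
def IsBase (B F : Finset (Finset α)) : Prop :=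
  B ⊆ F ∧ Span B = F ∧ ∀ H ⊆ B, Span H = F → H = B

/-- `A` is an atom of `F` at `x`: an inclusion-minimal member of `F` containing `x`. -/
def IsAtomAt (F : Finset (Finset α)) (x : α) (A : Finset α) : Prop :=
  A ∈ F ∧ x ∈ A ∧ ∀ B ∈ F, x ∈ B → B ⊆ A → B = A

/-- `A` is an atom of `F`: either the empty set (if it is in `F`) or an atom at some point. -/
def IsAtomOf (F : Finset (Finset α)) (A : Finset α) : Prop :=
  (A = ∅ ∧ A ∈ F) ∨ ∃ x, IsAtomAt F x A

/-- The surmise function: the collection of atoms of `F` at `x`. -/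
def surmise (F : Finset (Finset α)) (x : α) : Finset (Finset α) :=
  F.filter fun A => x ∈ A ∧ ∀ B ∈ F, x ∈ B → B ⊆ A → B = A

/-- `{σ(x) : x ∈ ∪F}` forms a partition of `B \ {∅}`. -/
def SurmisePartition (F B : Finset (Finset α)) : Prop :=
  (∀ x ∈ F.sup id, ∀ y ∈ F.sup id,
      surmise F x = surmise F y ∨ Disjoint (surmise F x) (surmise F y)) ∧
  (F.sup id).sup (surmise F) = B.erase ∅

/-- The endpoints of `X` in the family `B`: elements of `X` lying in no proper
subset of `X` belonging to `B`. -/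
def endpoints (B : Finset (Finset α)) (X : Finset α) : Finset α :=
  X \ (B.filter fun Y => Y ⊂ X).sup id

/-- A family is discriminative if points contained in the same members are equal. -/
def Discriminative (F : Finset (Finset α)) : Prop :=
  ∀ u ∈ F.sup id, ∀ v ∈ F.sup id, (∀ S ∈ F, (u ∈ S ↔ v ∈ S)) → u = v

/-!
`Span G` is closed under unions, and a family is well-graded as soon as every member `P` can be
enlarged inside the family by one point of any member `Q ⊄ P`: grow `P` towards `Q`, or `Q`
towards `P` when `Q ⊆ P`, and reverse. To find that point, take `A ∈ G` below `P` and `B ∈ G`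
below `Q` but not below `P`, and follow a tight path of `G` from `A` to `B`. Its first member `C`
not below `P` differs from its predecessor by a single point `x`, which lies in `B` because the
path is a geodesic, and `P ∪ C = insert x P`.
-/

open scoped symmDiff

section SymmDiff

variable {A B C P : Finset α} {x : α}

lemma card_symmDiff_insert_self (hx : x ∉ P) : #(P ∆ insert x P) = 1 := by
  rw [symmDiff_of_le (subset_insert x P), insert_sdiff_of_notMem _ hx, sdiff_self,
    bot_eq_empty, insert_empty, card_singleton]

lemma card_insert_symmDiff_add_one (hxA : x ∉ A) (hxB : x ∈ B) :
    #(insert x A ∆ B) + 1 = #(A ∆ B) := by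
  have hx : x ∈ A ∆ B := mem_symmDiff.2 (Or.inr ⟨hxB, hxA⟩)
  have : insert x A ∆ B = (A ∆ B).erase x := by
    ext y
    by_cases hy : y = x
    · subst hy; simp [mem_symmDiff, hxA, hxB]
    · simp [mem_symmDiff, hy]
  rw [this, card_erase_add_one hx]

lemma card_symmDiff_le_add (A B C : Finset α) : #(A ∆ C) ≤ #(A ∆ B) + #(B ∆ C) :=
  (card_le_card (symmDiff_triangle A B C)).trans (card_union_le _ _)

lemma mem_of_card_symmDiff_add_eq (h : #(A ∆ C) + #(C ∆ B) = #(A ∆ B)) (hxC : x ∈ C)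
    (hxA : x ∉ A) : x ∈ B := by
  by_contra hxB
  have hx : x ∈ A ∆ C ∩ C ∆ B := by simp [mem_symmDiff, *]
  have := card_union_add_card_inter (A ∆ C) (C ∆ B)
  have := card_le_card (t := A ∆ C ∪ C ∆ B) (symmDiff_triangle A C B)
  have := card_pos.2 ⟨x, hx⟩
  omega

lemma subset_insert_of_card_symmDiff_eq_one (h : #(A ∆ C) = 1) (hxC : x ∈ C) (hxA : x ∉ A) :
    C ⊆ insert x A := by
  obtain ⟨y, hy⟩ := card_eq_one.1 h
  have hxy : x = y := by simpa [hy] using mem_symmDiff.2 (Or.inr ⟨hxC, hxA⟩)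
  intro z hzC
  by_cases hzA : z ∈ A
  · exact mem_insert_of_mem hzA
  · have : z ∈ A ∆ C := mem_symmDiff.2 (Or.inr ⟨hzC, hzA⟩)
    simp_all

end SymmDiff

section TightPath

variable {F : Finset (Finset α)} {P Q R : Finset α} {p : List (Finset α)}

lemma card_symmDiff_add_one_le_length :
    ∀ {p : List (Finset α)} {P Q : Finset α}, p.head? = some P → p.getLast? = some Q →
      p.IsChain (fun A B => #(A ∆ B) = 1) → #(P ∆ Q) + 1 ≤ p.length
  | [], _, _, hP, _, _ => by simp at hP
  | [S], P, Q, hP, hQ, _ => by simp_all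
  | S :: T :: p, P, Q, hP, hQ, hp => by
    obtain rfl : S = P := by simpa using hP
    rw [List.getLast?_cons_cons] at hQ
    rw [List.isChain_cons_cons] at hp
    have := card_symmDiff_add_one_le_length rfl hQ hp.2
    have := card_symmDiff_le_add S T Q
    simp only [List.length_cons] at *
    omega

lemma IsTightPath.self (hP : P ∈ F) : IsTightPath F P P [P] :=
  ⟨rfl, rfl, by simp, by simpa using hP, List.isChain_singleton P⟩

lemma IsTightPath.cons (hP : P ∈ F) (hPR : #(P ∆ R) = 1) (hRQ : #(R ∆ Q) + 1 = #(P ∆ Q))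
    (h : IsTightPath F R Q p) : IsTightPath F P Q (P :: p) := by
  obtain ⟨hhead, hlast, hlen, hmem, hchain⟩ := h
  cases p with
  | nil => simp at hhead
  | cons S p =>
  obtain rfl : S = R := by simpa using hhead
  refine ⟨rfl, by rwa [List.getLast?_cons_cons], by simp [hlen, ← hRQ], ?_, ?_⟩
  · simpa [hP] using hmem
  · exact List.isChain_cons_cons.2 ⟨hPR, hchain⟩

lemma IsTightPath.reverse (h : IsTightPath F P Q p) : IsTightPath F Q P p.reverse := by
  obtain ⟨hhead, hlast, hlen, hmem, hchain⟩ := h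
  refine ⟨by simpa using hlast, by simpa using hhead, by simp [hlen, symmDiff_comm],
    by simpa using hmem, ?_⟩
  have hchain : p.IsChain (fun A B => #(A ∆ B) = 1) := hchain
  exact List.isChain_reverse.2 (by simpa only [symmDiff_comm] using hchain)

lemma IsTightPath.exists_step (h : IsTightPath F P Q p) (hPQ : P ≠ Q) :
    ∃ R ∈ F, #(P ∆ R) = 1 ∧ #(R ∆ Q) + 1 = #(P ∆ Q) := by
  obtain ⟨hhead, hlast, hlen, hmem, hchain⟩ := h
  rcases p with _ | ⟨S, _ | ⟨R, p⟩⟩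
  · simp at hhead
  · simp_all
  obtain rfl : S = P := by simpa using hhead
  rw [List.getLast?_cons_cons] at hlast
  obtain ⟨hSR, hchain⟩ := List.isChain_cons_cons.1 hchain
  have := card_symmDiff_add_one_le_length rfl hlast hchain
  have := card_symmDiff_le_add S R Q
  refine ⟨R, hmem R (by simp), hSR, ?_⟩
  simp only [List.length_cons] at *
  omega

lemma WellGraded.exists_step (hF : WellGraded F) (hP : P ∈ F) (hQ : Q ∈ F) (hPQ : P ≠ Q) :
    ∃ R ∈ F, #(P ∆ R) = 1 ∧ #(R ∆ Q) + 1 = #(P ∆ Q) :=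
  (hF P hP Q hQ hPQ).elim fun _ hp => hp.exists_step hPQ

lemma wellGraded_of_exists_insert
    (h : ∀ P ∈ F, ∀ Q ∈ F, ¬ Q ⊆ P → ∃ x ∈ Q \ P, insert x P ∈ F) : WellGraded F := by
  suffices ∀ n, ∀ P ∈ F, ∀ Q ∈ F, #(P ∆ Q) = n → ∃ p, IsTightPath F P Q p from
    fun P hP Q hQ _ => this _ P hP Q hQ rfl
  intro n
  induction n using Nat.strong_induction_on with
  | _ n ih =>
  have grow : ∀ P ∈ F, ∀ Q ∈ F, #(P ∆ Q) = n → ¬ Q ⊆ P → ∃ p, IsTightPath F P Q p := by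
    intro P hP Q hQ hn hQP
    obtain ⟨x, hx, hxF⟩ := h P hP Q hQ hQP
    obtain ⟨hxQ, hxP⟩ := mem_sdiff.1 hx
    have hdist := card_insert_symmDiff_add_one hxP hxQ
    obtain ⟨p, hp⟩ := ih _ (by omega) _ hxF Q hQ rfl
    exact ⟨_, hp.cons hP (card_symmDiff_insert_self hxP) hdist⟩
  intro P hP Q hQ hn
  by_cases hQP : Q ⊆ P
  · by_cases hPQ : P ⊆ Q
    · obtain rfl := hPQ.antisymm hQP
      exact ⟨_, IsTightPath.self hP⟩
    · obtain ⟨p, hp⟩ := grow Q hQ P hP (by rw [symmDiff_comm, hn]) hPQ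
      exact ⟨_, hp.reverse⟩
  · exact grow P hP Q hQ hn hQP

end TightPath

section Span

variable {G : Finset (Finset α)} {P Q A B : Finset α}

lemma mem_Span_iff : P ∈ Span G ↔ ∃ H ⊆ G, H.Nonempty ∧ H.sup id = P := by
  simp [Span, and_assoc]

lemma exists_subset_of_mem_Span (hP : P ∈ Span G) : ∃ A ∈ G, A ⊆ P := by
  obtain ⟨H, hHG, ⟨A, hA⟩, rfl⟩ := mem_Span_iff.1 hP
  exact ⟨A, hHG hA, le_sup (f := id) hA⟩

lemma exists_not_subset_of_mem_Span (hQ : Q ∈ Span G) (hQP : ¬ Q ⊆ P) :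
    ∃ B ∈ G, B ⊆ Q ∧ ¬ B ⊆ P := by
  obtain ⟨H, hHG, -, rfl⟩ := mem_Span_iff.1 hQ
  by_contra! hH
  exact hQP (Finset.sup_le fun B hB => hH B (hHG hB) (le_sup (f := id) hB))

lemma union_mem_Span (hP : P ∈ Span G) (hA : A ∈ G) : P ∪ A ∈ Span G := by
  obtain ⟨H, hHG, hH, rfl⟩ := mem_Span_iff.1 hP
  exact mem_Span_iff.2 ⟨insert A H, insert_subset hA hHG, insert_nonempty _ _,
    by rw [sup_insert, sup_comm]; rfl⟩

lemma exists_insert_mem_Span (hG : WellGraded G) (hP : P ∈ Span G) (hA : A ∈ G) (hAP : A ⊆ P)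
    (hB : B ∈ G) (hBP : ¬ B ⊆ P) : ∃ x ∈ B \ P, insert x P ∈ Span G := by
  induction hn : #(A ∆ B) using Nat.strong_induction_on generalizing A with
  | _ n ih =>
  obtain ⟨C, hC, hAC, hCB⟩ := hG.exists_step hA hB (by rintro rfl; exact hBP hAP)
  by_cases hCP : C ⊆ P
  · exact ih #(C ∆ B) (by omega) hC hCP rfl
  obtain ⟨x, hxC, hxP⟩ := not_subset.1 hCP
  have hxA : x ∉ A := fun hxA => hxP (hAP hxA)
  have hxB := mem_of_card_symmDiff_add_eq (B := B) (by omega) hxC hxA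
  have hCx := subset_insert_of_card_symmDiff_eq_one hAC hxC hxA
  have : P ∪ C = insert x P :=
    (union_subset (subset_insert x P) (hCx.trans (insert_subset_insert x hAP))).antisymm
      (insert_subset (mem_union_right P hxC) subset_union_left)
  exact ⟨x, mem_sdiff.2 ⟨hxB, hxP⟩, this ▸ union_mem_Span hP hC⟩

end Span

/-- The span of a well-graded family is itself well-graded. -/
theorem span_wellGraded (G : Finset (Finset α)) (hG : WellGraded G) :
    WellGraded (Span G) := by
  refine wellGraded_of_exists_insert fun P hP Q hQ hQP => ?_
  obtain ⟨A, hA, hAP⟩ := exists_subset_of_mem_Span hP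
  obtain ⟨B, hB, hBQ, hBP⟩ := exists_not_subset_of_mem_Span hQ hQP
  obtain ⟨x, hx, hxP⟩ := exists_insert_mem_Span hG hP hA hAP hB hBP
  exact ⟨x, sdiff_subset_sdiff hBQ le_rfl hx, hxP⟩
end

section
/- Let F be a ∪-closed family whose base B contains the empty set. Then F is well-graded if and only if for every K in B there is a tight path in F from the empty set to K. -/
open Finset

variable {α : Type*} [DecidableEq α]

/-!
A tight path from `∅` to `K` must add one point of `K` at each step, so the hypothesis says that
every base element `K` is reached from `∅` by a chain `∅ ⊂ K₁ ⊂ ⋯ ⊂ K` in `F` growing one point at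
a time. Union-closure transports such a chain: if `K` has one and `K ⊄ L ∈ F`, the first point of
the chain outside `L` can be added to `L`, and the last one can be removed from `L ∪ K`. The latter
shows that every nonempty union of base elements loses some point inside `F`, so every member of
`F` has a chain. With chains everywhere, the former (or the latter, when `Q ⊆ P`) gives from any
`P ≠ Q` a step to a member one unit closer to `Q`, and tight paths follow by induction on `|P ∆ Q|`.
-/

open scoped symmDiff

section SymmDiff

variable {s t : Finset α} {x : α}

lemma symmDiff_singleton_of_notMem (hx : x ∉ s) : s ∆ {x} = insert x s := by
  ext y
  by_cases hy : y = x <;> simp [mem_symmDiff, hy, hx]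

lemma symmDiff_singleton_of_mem (hx : x ∈ s) : s ∆ {x} = s.erase x := by
  ext y
  by_cases hy : y = x <;> simp [mem_symmDiff, hy, hx]

lemma card_le_card_add_card_symmDiff (s t : Finset α) : #t ≤ #s + #(s ∆ t) :=
  calc #t ≤ #(t \ s) + #s := card_le_card_sdiff_add_card
    _ ≤ #(s ∆ t) + #s := by gcongr; exact symmDiff_subset_sdiff'
    _ = #s + #(s ∆ t) := add_comm _ _

lemma exists_eq_insert_of_card_symmDiff_eq_one (hst : #(s ∆ t) = 1) (hcard : #t = #s + 1) :
    ∃ x ∉ s, t = insert x s := by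
  obtain ⟨x, hx⟩ := card_eq_one.mp hst
  have ht : t = s ∆ {x} := by rw [← hx, symmDiff_symmDiff_cancel_left]
  by_cases hxs : x ∈ s
  · rw [ht, symmDiff_singleton_of_mem hxs, card_erase_of_mem hxs] at hcard
    omega
  · exact ⟨x, hxs, ht.trans (symmDiff_singleton_of_notMem hxs)⟩

end SymmDiff

section UnionClosed

variable {F : Finset (Finset α)}

lemma UnionClosed.union_mem (hF : UnionClosed F) {A C : Finset α} (hA : A ∈ F) (hC : C ∈ F) :
    A ∪ C ∈ F := by
  simpa using hF {A, C} (insert_subset hA (singleton_subset_iff.mpr hC)) (insert_nonempty _ _)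

lemma UnionClosed.sup_mem (hF : UnionClosed F) (hempty : ∅ ∈ F) {H : Finset (Finset α)}
    (hH : H ⊆ F) : H.sup id ∈ F := by
  rcases H.eq_empty_or_nonempty with rfl | hne
  · exact hempty
  · exact hF H hH hne

end UnionClosed

inductive ChainTo (F : Finset (Finset α)) : Finset α → Prop
  | empty : ∅ ∈ F → ChainTo F ∅
  | step {A : Finset α} (x : α) : ChainTo F A → x ∉ A → insert x A ∈ F →
      ChainTo F (insert x A)

namespace ChainTo

variable {F : Finset (Finset α)} {K : Finset α}

lemma mem (h : ChainTo F K) : K ∈ F := by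
  cases h with
  | empty h => exact h
  | step _ _ _ h => exact h

lemma exists_insert_mem (hF : UnionClosed F) (h : ChainTo F K) {L : Finset α} (hL : L ∈ F)
    (hKL : ¬K ⊆ L) : ∃ x ∈ K, x ∉ L ∧ insert x L ∈ F := by
  induction h with
  | empty => exact absurd (empty_subset L) hKL
  | @step A x _ _ hmem ih =>
    by_cases hAL : A ⊆ L
    · have hxL : x ∉ L := fun hxL => hKL (insert_subset hxL hAL)
      refine ⟨x, mem_insert_self x A, hxL, ?_⟩
      have : L ∪ insert x A = insert x L := by
        rw [union_insert, union_eq_left.mpr hAL]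
      exact this ▸ hF.union_mem hL hmem
    · obtain ⟨y, hyA, hyL, hy⟩ := ih hAL
      exact ⟨y, mem_insert_of_mem hyA, hyL, hy⟩

lemma exists_erase_union_mem (hF : UnionClosed F) (h : ChainTo F K) {L : Finset α} (hL : L ∈ F)
    (hKL : ¬K ⊆ L) : ∃ x ∈ K, x ∉ L ∧ (L ∪ K).erase x ∈ F := by
  induction h with
  | empty => exact absurd (empty_subset L) hKL
  | @step A x hA hxA _ ih =>
    by_cases hxL : x ∈ L
    · have hAL : ¬A ⊆ L := fun hAL => hKL (insert_subset hxL hAL)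
      obtain ⟨y, hyA, hyL, hy⟩ := ih hAL
      refine ⟨y, mem_insert_of_mem hyA, hyL, ?_⟩
      rwa [union_insert, insert_eq_of_mem (mem_union_left A hxL)]
    · refine ⟨x, mem_insert_self x A, hxL, ?_⟩
      rw [union_insert, erase_insert (by simp [hxL, hxA])]
      exact hF.union_mem hL hA.mem

lemma exists_symmDiff_singleton_mem (hF : UnionClosed F) {P Q : Finset α} (hP : ChainTo F P)
    (hQ : ChainTo F Q) (hPQ : P ≠ Q) : ∃ x ∈ P ∆ Q, P ∆ {x} ∈ F := by
  by_cases hQP : Q ⊆ P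
  · obtain ⟨x, hxP, hxQ, hx⟩ :=
      hP.exists_erase_union_mem hF hQ.mem fun hPQ' => hPQ (hPQ'.antisymm hQP)
    rw [union_eq_right.mpr hQP] at hx
    exact ⟨x, mem_symmDiff.mpr (Or.inl ⟨hxP, hxQ⟩), symmDiff_singleton_of_mem hxP ▸ hx⟩
  · obtain ⟨x, hxQ, hxP, hx⟩ := hQ.exists_insert_mem hF hP.mem hQP
    exact ⟨x, mem_symmDiff.mpr (Or.inr ⟨hxQ, hxP⟩), symmDiff_singleton_of_notMem hxP ▸ hx⟩

end ChainTo

section Paths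

variable {F : Finset (Finset α)}

lemma card_le_of_isChain {A K : Finset α} :
    ∀ {q : List (Finset α)}, (A :: q).IsChain (fun X Y => #(X ∆ Y) = 1) →
      (A :: q).getLast? = some K → #K ≤ #A + q.length
  | [], _, hK => by simp_all
  | C :: q, hchain, hK => by
    rw [List.isChain_cons_cons] at hchain
    rw [List.getLast?_cons_cons] at hK
    have hC := card_le_card_add_card_symmDiff A C
    have := card_le_of_isChain hchain.2 hK
    simp only [List.length_cons]
    omega

/-- Since a unit step gains at most one point (`card_le_of_isChain`), the cardinality hypothesis
forces every step to insert a point. -/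
lemma ChainTo.of_isChain {A K : Finset α} :
    ∀ {q : List (Finset α)}, ChainTo F A → (A :: q).IsChain (fun X Y => #(X ∆ Y) = 1) →
      (∀ S ∈ q, S ∈ F) → (A :: q).getLast? = some K → #K = #A + q.length → ChainTo F K
  | [], hA, _, _, hK, _ => by simp_all
  | C :: q, hA, hchain, hq, hK, hcard => by
    rw [List.isChain_cons_cons] at hchain
    rw [List.getLast?_cons_cons] at hK
    have hCA : #C = #A + 1 := by
      have := card_le_card_add_card_symmDiff A C
      have := card_le_of_isChain hchain.2 hK
      simp only [List.length_cons] at hcard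
      omega
    obtain ⟨x, hxA, rfl⟩ := exists_eq_insert_of_card_symmDiff_eq_one hchain.1 hCA
    have hC : ChainTo F (insert x A) := hA.step x hxA (hq _ List.mem_cons_self)
    exact hC.of_isChain hchain.2 (fun S hS => hq S (List.mem_cons_of_mem _ hS)) hK
      (by simp only [List.length_cons] at hcard; omega)

lemma ChainTo.of_isTightPath (hempty : ∅ ∈ F) {K : Finset α} {p : List (Finset α)}
    (hp : IsTightPath F ∅ K p) : ChainTo F K := by
  obtain ⟨hhead, hlast, hlength, hmem, hchain⟩ := hp
  obtain ⟨q, rfl⟩ : ∃ q, p = ∅ :: q := by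
    cases p with
    | nil => simp at hhead
    | cons A q => simp only [List.head?_cons, Option.some_inj] at hhead; exact ⟨q, hhead ▸ rfl⟩
  rw [← bot_eq_empty, bot_symmDiff, List.length_cons] at hlength
  exact (ChainTo.empty hempty).of_isChain hchain (fun S hS => hmem S (List.mem_cons_of_mem _ hS))
    hlast (by simpa using hlength.symm)

lemma isTightPath_singleton {P : Finset α} (hP : P ∈ F) : IsTightPath F P P [P] :=
  ⟨rfl, rfl, by simp, by simpa using hP, List.isChain_singleton _⟩

lemma IsTightPath.cons_symmDiff_singleton {P Q : Finset α} {x : α} {p : List (Finset α)}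
    (hp : IsTightPath F (P ∆ {x}) Q p) (hP : P ∈ F) (hx : x ∈ P ∆ Q) :
    IsTightPath F P Q (P :: p) := by
  obtain ⟨hhead, hlast, hlength, hmem, hchain⟩ := hp
  obtain ⟨q, rfl⟩ : ∃ q, p = P ∆ {x} :: q := by
    cases p with
    | nil => simp at hhead
    | cons A q => simp only [List.head?_cons, Option.some_inj] at hhead; exact ⟨q, hhead ▸ rfl⟩
  have hdist : (P ∆ {x}) ∆ Q = (P ∆ Q).erase x := by
    rw [symmDiff_right_comm, symmDiff_singleton_of_mem hx]
  refine ⟨rfl, by rwa [List.getLast?_cons_cons], ?_, ?_, ?_⟩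
  · rw [List.length_cons, hlength, hdist, card_erase_of_mem hx]
    have := card_pos.mpr ⟨x, hx⟩
    omega
  · intro S hS
    rcases List.mem_cons.mp hS with rfl | hS
    exacts [hP, hmem S hS]
  · exact List.isChain_cons_cons.mpr ⟨by simp [symmDiff_symmDiff_cancel_left], hchain⟩

lemma exists_isTightPath_of_forall_exists_step
    (hstep : ∀ P ∈ F, ∀ Q ∈ F, P ≠ Q → ∃ x ∈ P ∆ Q, P ∆ {x} ∈ F) {P Q : Finset α}
    (hP : P ∈ F) (hQ : Q ∈ F) : ∃ p, IsTightPath F P Q p := by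
  induction hn : #(P ∆ Q) generalizing P with
  | zero =>
    rw [card_eq_zero, symmDiff_eq_empty] at hn
    exact hn ▸ ⟨[P], isTightPath_singleton hP⟩
  | succ n ih =>
    have hPQ : P ≠ Q := by
      rintro rfl
      simp at hn
    obtain ⟨x, hx, hxF⟩ := hstep P hP Q hQ hPQ
    have hdist : #((P ∆ {x}) ∆ Q) = n := by
      rw [symmDiff_right_comm, symmDiff_singleton_of_mem hx, card_erase_of_mem hx, hn]
      rfl
    obtain ⟨p, hp⟩ := ih hxF hdist
    exact ⟨P :: p, hp.cons_symmDiff_singleton hP hx⟩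

end Paths

section Span

variable {F B : Finset (Finset α)}

lemma exists_erase_sup_mem (hF : UnionClosed F) (hempty : ∅ ∈ F) {H : Finset (Finset α)}
    (hH : ∀ K ∈ H, ChainTo F K) (hne : (H.sup id).Nonempty) :
    ∃ x ∈ H.sup id, (H.sup id).erase x ∈ F := by
  induction H using Finset.induction_on with
  | empty => simp at hne
  | @insert K H _ ih =>
    have hK := hH K (mem_insert_self K H)
    have hHF : H.sup id ∈ F := hF.sup_mem hempty fun S hS => (hH S (mem_insert_of_mem hS)).mem
    rw [sup_insert, id, sup_eq_union] at hne ⊢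
    by_cases hKH : K ⊆ H.sup id
    · rw [union_eq_right.mpr hKH] at hne ⊢
      exact ih (fun S hS => hH S (mem_insert_of_mem hS)) hne
    · obtain ⟨x, hxK, -, hx⟩ := hK.exists_erase_union_mem hF hHF hKH
      exact ⟨x, mem_union_left _ hxK, union_comm K _ ▸ hx⟩

lemma chainTo_of_mem_span (hF : UnionClosed F) (hempty : ∅ ∈ F) (hspan : F ⊆ Span B)
    (hB : ∀ K ∈ B, ChainTo F K) {K : Finset α} (hK : K ∈ F) : ChainTo F K := by
  induction K using Finset.strongInduction with
  | H K ih =>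
    rcases K.eq_empty_or_nonempty with rfl | hne
    · exact .empty hempty
    obtain ⟨H, ⟨hHB, -⟩, rfl⟩ := by simpa [Span] using hspan hK
    obtain ⟨x, hx, hxF⟩ := exists_erase_sup_mem hF hempty (fun S hS => hB S (hHB hS)) hne
    have := (ih _ (erase_ssubset hx) hxF).step x (notMem_erase x _) (by rwa [insert_erase hx])
    rwa [insert_erase hx] at this

end Span

/-- If the base contains `∅`, then `F` is well-graded iff every base element can be
reached from `∅` by a tight path in `F`. -/
theorem wellGraded_iff_paths_from_empty (F B : Finset (Finset α)) (hF : UnionClosed F)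
    (hB : IsBase B F) (hempty : (∅ : Finset α) ∈ B) :
    WellGraded F ↔ ∀ K ∈ B, ∃ p, IsTightPath F ∅ K p := by
  have hemptyF : (∅ : Finset α) ∈ F := hB.1 hempty
  constructor
  · intro hW K hK
    by_cases hK0 : ∅ = K
    · exact hK0 ▸ ⟨[∅], isTightPath_singleton hemptyF⟩
    · exact hW ∅ hemptyF K (hB.1 hK) hK0
  · intro hpaths P hP Q hQ _
    have hchain : ∀ K ∈ F, ChainTo F K := fun K hK =>
      chainTo_of_mem_span hF hemptyF hB.2.1.ge
        (fun K' hK' => (hpaths K' hK').elim fun _ hp => .of_isTightPath hemptyF hp) hK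
    exact exists_isTightPath_of_forall_exists_step
      (fun P hP Q hQ hPQ => (hchain P hP).exists_symmDiff_singleton_mem hF (hchain Q hQ) hPQ) hP hQ
end

section
/- The base of a finite ∪-closed family F equals the collection of all atoms of F. -/
open Finset

variable {α : Type*} [DecidableEq α]

lemma mem_Span {G : Finset (Finset α)} {Y : Finset α} :
    Y ∈ Span G ↔ ∃ H, H ⊆ G ∧ H.Nonempty ∧ H.sup id = Y := by
  simp only [Span, Finset.mem_image, Finset.mem_filter, Finset.mem_powerset]
  tauto

lemma Span_mono {G G' : Finset (Finset α)} (h : G ⊆ G') : Span G ⊆ Span G' := by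
  intro Y hY
  rw [mem_Span] at *
  obtain ⟨H, h1, h2, h3⟩ := hY
  exact ⟨H, h1.trans h, h2, h3⟩

/-- The base of a ∪-closed family consists exactly of its atoms. -/
theorem base_eq_atoms (F B : Finset (Finset α)) (hF : UnionClosed F) (hB : IsBase B F) :
    ∀ X : Finset α, X ∈ B ↔ IsAtomOf F X := by
  obtain ⟨hBF, hSpan, hmin⟩ := hB
  intro X
  constructor
  · intro hXB
    by_contra hnot
    unfold IsAtomOf IsAtomAt at hnot
    push_neg at hnot
    obtain ⟨hne, hatom⟩ := hnot
    have hXF : X ∈ F := hBF hXB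
    have hXne : X ≠ ∅ := fun h => hne h hXF
    -- For each x ∈ X there is a proper subset of X in F containing x
    have hprop : ∀ x ∈ X, ∃ B', B' ∈ F ∧ x ∈ B' ∧ B' ⊂ X := by
      intro x hx
      obtain ⟨B', hB'F, hxB', hB'X, hB'ne⟩ := hatom x hXF hx
      exact ⟨B', hB'F, hxB', lt_of_le_of_ne hB'X hB'ne⟩
    set H : Finset (Finset α) := (B.erase X).filter (· ⊂ X) with hHdef
    have hHsub : H ⊆ B.erase X := Finset.filter_subset _ _
    -- each x ∈ X lies in some member of H
    have hcov : ∀ x ∈ X, ∃ S ∈ H, x ∈ S := by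
      intro x hx
      obtain ⟨B', hB'F, hxB', hB'X⟩ := hprop x hx
      have : B' ∈ Span B := hSpan ▸ hB'F
      obtain ⟨K, hKB, _, hKsup⟩ := mem_Span.mp this
      obtain ⟨S, hSK, hxS⟩ := Finset.mem_sup.mp (hKsup ▸ hxB')
      have hSB' : S ⊆ B' := hKsup ▸ Finset.le_sup (f := id) hSK
      have hSX : S ⊂ X := lt_of_le_of_lt hSB' hB'X
      refine ⟨S, ?_, hxS⟩
      rw [hHdef, Finset.mem_filter]
      exact ⟨Finset.mem_erase.mpr ⟨ne_of_lt hSX, hKB hSK⟩, hSX⟩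
    have hHsup : H.sup id = X := by
      apply le_antisymm
      · exact Finset.sup_le fun S hS => le_of_lt (Finset.mem_filter.mp hS).2
      · intro x hx
        obtain ⟨S, hSH, hxS⟩ := hcov x hx
        exact Finset.mem_sup.mpr ⟨S, hSH, hxS⟩
    have hHne : H.Nonempty := by
      obtain ⟨x, hx⟩ := Finset.nonempty_iff_ne_empty.mpr hXne
      obtain ⟨S, hSH, _⟩ := hcov x hx
      exact ⟨S, hSH⟩
    -- Span (B.erase X) = F
    have hSpan' : Span (B.erase X) = F := by
      apply Finset.Subset.antisymm
      · exact hSpan ▸ Span_mono (Finset.erase_subset _ _)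
      · intro Y hYF
        obtain ⟨K, hKB, hKne, hKsup⟩ := mem_Span.mp (hSpan ▸ hYF : Y ∈ Span B)
        by_cases hXK : X ∈ K
        · refine mem_Span.mpr ⟨K.erase X ∪ H, ?_, ⟨hHne.choose,
            Finset.mem_union_right _ hHne.choose_spec⟩, ?_⟩
          · exact Finset.union_subset (Finset.erase_subset_erase _ hKB) hHsub
          · rw [Finset.sup_union, hHsup, ← hKsup]
            conv_rhs => rw [← Finset.insert_erase hXK]
            rw [Finset.sup_insert]
            exact sup_comm _ _
        · exact mem_Span.mpr ⟨K, Finset.subset_erase.mpr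
            ⟨hKB, fun h => hXK h⟩ |>.trans (le_refl _) |>.trans (le_refl _), hKne, hKsup⟩
    have heq := hmin (B.erase X) (Finset.erase_subset _ _) hSpan'
    rw [← heq] at hXB
    exact Finset.notMem_erase X B hXB
  · intro hA
    rcases hA with ⟨rfl, hmem⟩ | ⟨x, hXF, hxX, hminX⟩
    · obtain ⟨H, hHB, hHne, hsup⟩ := mem_Span.mp (hSpan ▸ hmem : (∅ : Finset α) ∈ Span B)
      obtain ⟨S, hS⟩ := hHne
      have hS0 : S = ∅ := by
        have h := Finset.le_sup (f := id) hS
        rw [hsup] at h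
        exact Finset.subset_empty.mp h
      exact hHB (hS0 ▸ hS)
    · obtain ⟨H, hHB, _, hsup⟩ := mem_Span.mp (hSpan ▸ hXF : X ∈ Span B)
      obtain ⟨S, hS, hxS⟩ := Finset.mem_sup.mp (hsup ▸ hxX)
      have hSX : S ⊆ X := hsup ▸ Finset.le_sup (f := id) hS
      have hSeq := hminX S (hBF (hHB hS)) hxS hSX
      exact hSeq ▸ hHB hS
end

section
/- There exists a ∪-closed, well-graded, discriminative family F not containing the empty set whose surmise function does not partition its base. Concretely, the span of the base A = {{x,y,c}, {y,d}, {c,d}} on ground set {x,y,c,d} is discriminative and well-graded, but {σ(z) : z ∈ ∪F} is not a partition of A, since σ(y) and σ(c) are distinct but both contain {x,y,c} (indeed σ(y) ∩ σ(c) ≠ ∅ while σ(y) ≠ σ(c)). -/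
open Finset

variable {α : Type*} [DecidableEq α]

/-!
Every property in the statement is invariant under renaming the ground set along an
injection, so it suffices to check them for the copy of the example on `Fin 4`
(`x, y, c, d ↦ 0, 1, 2, 3`), where they are decidable. There the span is
`{xyc, yd, cd, ycd, xycd}`, so `σ(y) = {xyc, yd}` and `σ(c) = {xyc, cd}`: they overlap in
`xyc` without being equal. Well-gradedness reduces to a decidable one-step criterion: from
any member `P ≠ Q` one can step to a member at distance one that is one unit closer to `Q`.
-/

theorem mem_span {G : Finset (Finset α)} {X : Finset α} :
    X ∈ Span G ↔ ∃ H ⊆ G, H.Nonempty ∧ H.sup id = X := by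
  simp [Span, and_assoc]

theorem unionClosed_span (G : Finset (Finset α)) : UnionClosed (Span G) := by
  intro H hH hne
  choose K hKG hKne hKsup using fun S (hS : S ∈ H) => mem_span.mp (hH hS)
  refine mem_span.mpr ⟨H.attach.biUnion fun S => K S.1 S.2,
    biUnion_subset.mpr fun S _ => hKG S.1 S.2, ?_, ?_⟩
  · obtain ⟨S, hS⟩ := hne
    exact (hKne S hS).mono (subset_biUnion_of_mem _ (mem_attach _ ⟨S, hS⟩))
  · rw [sup_biUnion, ← sup_attach H id]
    exact sup_congr rfl fun S _ => hKsup S.1 S.2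

section MapGround

variable {β : Type*} [DecidableEq β] (e : β ↪ α)

theorem Finset.map_symmDiff (s t : Finset β) :
    (symmDiff s t).map e = symmDiff (s.map e) (t.map e) := by
  simp only [map_eq_image, image_symmDiff _ _ e.injective]

theorem map_sup_id (F : Finset (Finset β)) :
    (F.sup id).map e = (F.map (mapEmbedding e).toEmbedding).sup id := by
  induction F using Finset.induction_on with
  | empty => simp
  | insert _ _ _ ih => simp [map_union, ih]

theorem span_map (G : Finset (Finset β)) :
    Span (G.map (mapEmbedding e).toEmbedding) = (Span G).map (mapEmbedding e).toEmbedding := by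
  ext X
  simp only [mem_span, mem_map]
  constructor
  · rintro ⟨H, hH, hne, rfl⟩
    obtain ⟨H₀, hH₀, rfl⟩ := subset_map_iff.mp hH
    exact ⟨H₀.sup id, ⟨H₀, hH₀, map_nonempty.mp hne, rfl⟩, map_sup_id e H₀⟩
  · rintro ⟨_, ⟨H₀, hH₀, hne, rfl⟩, rfl⟩
    exact ⟨H₀.map (mapEmbedding e).toEmbedding, map_subset_map.mpr hH₀, hne.map,
      (map_sup_id e H₀).symm⟩

theorem surmise_map (F : Finset (Finset β)) (a : β) :
    surmise (F.map (mapEmbedding e).toEmbedding) (e a) =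
      (surmise F a).map (mapEmbedding e).toEmbedding := by
  ext X
  simp only [surmise, mem_filter, mem_map, RelEmbedding.coe_toEmbedding, mapEmbedding_apply]
  constructor
  · rintro ⟨⟨T, hT, rfl⟩, ha, hmin⟩
    refine ⟨T, ⟨hT, (mem_map' e).mp ha, fun B hB haB hBT => map_injective e ?_⟩, rfl⟩
    exact hmin _ ⟨B, hB, rfl⟩ ((mem_map' e).mpr haB) (map_subset_map.mpr hBT)
  · rintro ⟨T, ⟨hT, ha, hmin⟩, rfl⟩
    refine ⟨⟨T, hT, rfl⟩, (mem_map' e).mpr ha, ?_⟩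
    rintro _ ⟨B, hB, rfl⟩ haB hBT
    rw [hmin B hB ((mem_map' e).mp haB) (map_subset_map.mp hBT)]

theorem Discriminative.map {F : Finset (Finset β)} (h : Discriminative F) :
    Discriminative (F.map (mapEmbedding e).toEmbedding) := by
  intro u hu v hv huv
  rw [← map_sup_id, mem_map] at hu hv
  obtain ⟨a, ha, rfl⟩ := hu
  obtain ⟨b, hb, rfl⟩ := hv
  refine congrArg e (h a ha b hb fun S hS => ?_)
  simpa using huv (S.map e) (mem_map_of_mem _ hS)

theorem IsTightPath.map {F : Finset (Finset β)} {P Q : Finset β} {p : List (Finset β)}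
    (h : IsTightPath F P Q p) :
    IsTightPath (F.map (mapEmbedding e).toEmbedding) (P.map e) (Q.map e) (p.map (·.map e)) := by
  obtain ⟨hhead, hlast, hlen, hmem, hchain⟩ := h
  refine ⟨by simp [hhead], by simp [hlast], ?_, ?_, ?_⟩
  · rw [List.length_map, hlen, ← Finset.map_symmDiff, card_map]
  · simp only [List.mem_map, forall_exists_index, and_imp, forall_apply_eq_imp_iff₂]
    exact fun S hS => mem_map_of_mem _ (hmem S hS)
  · refine List.isChain_map_of_isChain _ (fun S T hST => ?_) hchain
    rwa [← Finset.map_symmDiff, card_map]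

theorem WellGraded.map {F : Finset (Finset β)} (h : WellGraded F) :
    WellGraded (F.map (mapEmbedding e).toEmbedding) := by
  rintro _ hP' _ hQ' hPQ
  obtain ⟨P, hP, rfl⟩ := mem_map.mp hP'
  obtain ⟨Q, hQ, rfl⟩ := mem_map.mp hQ'
  obtain ⟨p, hp⟩ := h P hP Q hQ (ne_of_apply_ne _ hPQ)
  exact ⟨_, hp.map e⟩

theorem IsBase.map {B F : Finset (Finset β)} (h : IsBase B F) :
    IsBase (B.map (mapEmbedding e).toEmbedding) (F.map (mapEmbedding e).toEmbedding) := by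
  obtain ⟨hBF, hspan, hmin⟩ := h
  refine ⟨map_subset_map.mpr hBF, by rw [span_map, hspan], fun H hH hHspan => ?_⟩
  obtain ⟨H₀, hH₀, rfl⟩ := subset_map_iff.mp hH
  rw [span_map] at hHspan
  rw [hmin H₀ hH₀ (map_injective _ hHspan)]

end MapGround

theorem not_surmisePartition {F B : Finset (Finset α)} {u v : α}
    (hu : u ∈ F.sup id) (hv : v ∈ F.sup id)
    (hne : surmise F u ≠ surmise F v) (hndisj : ¬ Disjoint (surmise F u) (surmise F v)) :
    ¬ SurmisePartition F B :=
  fun h => (h.1 u hu v hv).elim hne hndisj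

theorem wellGraded_of_exists_step {F : Finset (Finset α)}
    (h : ∀ P ∈ F, ∀ Q ∈ F, P ≠ Q →
      ∃ R ∈ F, #(symmDiff P R) = 1 ∧ #(symmDiff R Q) + 1 = #(symmDiff P Q)) :
    WellGraded F := by
  suffices hpath :
      ∀ n, ∀ P ∈ F, ∀ Q ∈ F, #(symmDiff P Q) = n → ∃ p, IsTightPath F P Q p from
    fun P hP Q hQ _ => hpath _ P hP Q hQ rfl
  intro n
  induction n with
  | zero =>
    intro P hP Q hQ hPQ
    obtain rfl : P = Q := symmDiff_eq_bot.mp (card_eq_zero.mp hPQ)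
    exact ⟨[P], rfl, rfl, by simp, by simpa using hP, List.isChain_singleton _⟩
  | succ n ih =>
    intro P hP Q hQ hPQ
    have hne : P ≠ Q := by rintro rfl; simp at hPQ
    obtain ⟨R, hR, hPR, hRQ⟩ := h P hP Q hQ hne
    obtain ⟨p, hhead, hlast, hlen, hmem, hchain⟩ := ih R hR Q hQ (by omega)
    obtain ⟨p, rfl⟩ : ∃ p', p = R :: p' := ⟨p.tail, List.eq_cons_of_mem_head? hhead⟩
    refine ⟨P :: R :: p, rfl, ?_, by simp_all, ?_, List.IsChain.cons_cons hPR hchain⟩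
    · simpa using hlast
    · simpa [hP] using hmem

def exampleBase : Finset (Finset (Fin 4)) := {{0, 1, 2}, {1, 3}, {2, 3}}

theorem span_exampleBase :
    Span exampleBase = {{0, 1, 2}, {1, 3}, {2, 3}, {1, 2, 3}, {0, 1, 2, 3}} := by
  decide

theorem discriminative_span_exampleBase : Discriminative (Span exampleBase) := by
  rw [Discriminative, span_exampleBase]
  decide

theorem wellGraded_span_exampleBase : WellGraded (Span exampleBase) := by
  refine wellGraded_of_exists_step ?_
  rw [span_exampleBase]
  decide

theorem isBase_exampleBase : IsBase exampleBase (Span exampleBase) := by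
  rw [IsBase]
  decide

theorem empty_not_mem_span_exampleBase : ∅ ∉ Span exampleBase := by
  rw [span_exampleBase]
  decide

theorem surmise_span_exampleBase_one_ne_two :
    surmise (Span exampleBase) 1 ≠ surmise (Span exampleBase) 2 := by
  rw [span_exampleBase]
  decide

theorem mem_surmise_span_exampleBase_one : {0, 1, 2} ∈ surmise (Span exampleBase) 1 := by
  rw [span_exampleBase]
  decide

theorem mem_surmise_span_exampleBase_two : {0, 1, 2} ∈ surmise (Span exampleBase) 2 := by
  rw [span_exampleBase]
  decide

/-- A ∪-closed, well-graded, discriminative family not containing `∅` whose surmise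
function does not partition its base. -/
theorem counterexample_surmise_not_partition (x y c d : α)
    (hxy : x ≠ y) (hxc : x ≠ c) (hxd : x ≠ d)
    (hyc : y ≠ c) (hyd : y ≠ d) (hcd : c ≠ d) :
    let A : Finset (Finset α) := {{x, y, c}, {y, d}, {c, d}}
    let F : Finset (Finset α) := Span A
    UnionClosed F ∧ Discriminative F ∧ WellGraded F ∧ (∅ : Finset α) ∉ F ∧
      IsBase A F ∧
      surmise F y ≠ surmise F c ∧
      {x, y, c} ∈ surmise F y ∧ {x, y, c} ∈ surmise F c ∧
      ¬ Disjoint (surmise F y) (surmise F c) ∧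
      ¬ SurmisePartition F A := by
  intro A F
  let e : Fin 4 ↪ α := ⟨![x, y, c, d], by
    intro i j hij
    fin_cases i <;> fin_cases j <;> simp_all⟩
  have hA : A = exampleBase.map (mapEmbedding e).toEmbedding := by
    simp only [A, exampleBase, map_insert, map_singleton, RelEmbedding.coe_toEmbedding,
      mapEmbedding_apply]
    rfl
  have hF : F = (Span exampleBase).map (mapEmbedding e).toEmbedding := by
    rw [← span_map, ← hA]
  have hxyc : ({x, y, c} : Finset α) = (mapEmbedding e).toEmbedding {0, 1, 2} := by
    simp only [RelEmbedding.coe_toEmbedding, mapEmbedding_apply, map_insert, map_singleton]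
    rfl
  have hne : surmise F y ≠ surmise F c := by
    rw [show y = e 1 from rfl, show c = e 2 from rfl, hF, surmise_map, surmise_map, Ne,
      map_inj]
    exact surmise_span_exampleBase_one_ne_two
  have hmem_y : {x, y, c} ∈ surmise F y := by
    rw [hxyc, show y = e 1 from rfl, hF, surmise_map]
    exact mem_map_of_mem _ mem_surmise_span_exampleBase_one
  have hmem_c : {x, y, c} ∈ surmise F c := by
    rw [hxyc, show c = e 2 from rfl, hF, surmise_map]
    exact mem_map_of_mem _ mem_surmise_span_exampleBase_two
  have hndisj : ¬ Disjoint (surmise F y) (surmise F c) :=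
    not_disjoint_iff.mpr ⟨_, hmem_y, hmem_c⟩
  have hsub : ({x, y, c} : Finset α) ⊆ F.sup id := le_sup (f := id) (mem_filter.mp hmem_y).1
  refine ⟨unionClosed_span A, hF ▸ discriminative_span_exampleBase.map e,
    hF ▸ wellGraded_span_exampleBase.map e, ?_, hA ▸ hF ▸ isBase_exampleBase.map e,
    hne, hmem_y, hmem_c, hndisj,
    not_surmisePartition (hsub (by simp)) (hsub (by simp)) hne hndisj⟩
  simpa [hF] using empty_not_mem_span_exampleBase
end
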